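/- Let (A, μ, Δ, α, c, R) be a quasi-triangular Hom-bialgebra. Then R satisfies the second quantum Hom-Yang-Baxter equation R₁₂ (R₁₃ R₂₃) = (R₂₃ R₁₃) R₁₂ in A ⊗ A ⊗ A, where R₁₂ = R ⊗ c, R₂₃ = c ⊗ R, R₁₃ = (τ ⊗ Id)(R₂₃). -/

import Mathlib

/-!
Apply the quasi-triangularity relation `τΔ(x) · R = R · Δ(x)` to the first leg of
`(Δ ⊗ α)(R) = R₁₃ R₂₃`; since `c` is a weak unit, the third leg contributes `α` on both sides, so
`R₁₂ · (Δ ⊗ α)(R) = (τΔ ⊗ α)(R) · R₁₂`. The flip `τ ⊗ Id` of the first two legs is multiplicative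
and exchanges `R₁₃` and `R₂₃`, so `(τΔ ⊗ α)(R) = (τ ⊗ Id)(R₁₃ R₂₃) = R₂₃ R₁₃`.
-/

open TensorProduct

variable {k : Type*} [CommRing k] {A : Type*} [AddCommGroup A] [Module k A]

/-- Componentwise product on `A ⊗ A` induced by a bilinear multiplication `μ`. -/
noncomputable def mulT2 (μ : A →ₗ[k] A →ₗ[k] A) (X Y : A ⊗[k] A) : A ⊗[k] A :=
  ((TensorProduct.map (TensorProduct.lift μ) (TensorProduct.lift μ)) ∘ₗ
    (TensorProduct.tensorTensorTensorComm k A A A A).toLinearMap) (X ⊗ₜ[k] Y)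

/-- Componentwise product on `(A ⊗ A) ⊗ A` induced by `μ`. -/
noncomputable def mulT3 (μ : A →ₗ[k] A →ₗ[k] A) (X Y : (A ⊗[k] A) ⊗[k] A) :
    (A ⊗[k] A) ⊗[k] A :=
  ((TensorProduct.map
      ((TensorProduct.map (TensorProduct.lift μ) (TensorProduct.lift μ)) ∘ₗ
        (TensorProduct.tensorTensorTensorComm k A A A A).toLinearMap)
      (TensorProduct.lift μ)) ∘ₗ
    (TensorProduct.tensorTensorTensorComm k (A ⊗[k] A) A (A ⊗[k] A) A).toLinearMap)
    (X ⊗ₜ[k] Y)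

/-- `R₁₂ = R ⊗ c`. -/
noncomputable def R12e (c : A) (R : A ⊗[k] A) : (A ⊗[k] A) ⊗[k] A := R ⊗ₜ[k] c

/-- `R₂₃ = c ⊗ R`. -/
noncomputable def R23e (c : A) (R : A ⊗[k] A) : (A ⊗[k] A) ⊗[k] A :=
  (TensorProduct.assoc k A A A).symm (c ⊗ₜ[k] R)

/-- `R₁₃ = (τ ⊗ Id)(R₂₃)`. -/
noncomputable def R13e (c : A) (R : A ⊗[k] A) : (A ⊗[k] A) ⊗[k] A :=
  TensorProduct.map (TensorProduct.comm k A A).toLinearMap LinearMap.id (R23e c R)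

section Multiplication

variable (μ : A →ₗ[k] A →ₗ[k] A)

@[simp]
lemma mulT2_tmul (a b a' b' : A) :
    mulT2 μ (a ⊗ₜ[k] b) (a' ⊗ₜ[k] b') = μ a a' ⊗ₜ[k] μ b b' := by
  simp [mulT2]

@[simp]
lemma mulT2_zero_left (Y : A ⊗[k] A) : mulT2 μ 0 Y = 0 := by
  simp [mulT2]

@[simp]
lemma mulT2_zero_right (X : A ⊗[k] A) : mulT2 μ X 0 = 0 := by
  simp [mulT2]

@[simp]
lemma mulT2_add_left (X X' Y : A ⊗[k] A) :
    mulT2 μ (X + X') Y = mulT2 μ X Y + mulT2 μ X' Y := by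
  simp [mulT2, add_tmul]

@[simp]
lemma mulT2_add_right (X Y Y' : A ⊗[k] A) :
    mulT2 μ X (Y + Y') = mulT2 μ X Y + mulT2 μ X Y' := by
  simp [mulT2, tmul_add]

@[simp]
lemma mulT3_tmul (X Y : A ⊗[k] A) (z w : A) :
    mulT3 μ (X ⊗ₜ[k] z) (Y ⊗ₜ[k] w) = mulT2 μ X Y ⊗ₜ[k] μ z w := by
  simp [mulT3, mulT2]

@[simp]
lemma mulT3_zero_left (Y : (A ⊗[k] A) ⊗[k] A) : mulT3 μ 0 Y = 0 := by
  simp [mulT3]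

@[simp]
lemma mulT3_zero_right (X : (A ⊗[k] A) ⊗[k] A) : mulT3 μ X 0 = 0 := by
  simp [mulT3]

@[simp]
lemma mulT3_add_left (X X' Y : (A ⊗[k] A) ⊗[k] A) :
    mulT3 μ (X + X') Y = mulT3 μ X Y + mulT3 μ X' Y := by
  simp [mulT3, add_tmul]

@[simp]
lemma mulT3_add_right (X Y Y' : (A ⊗[k] A) ⊗[k] A) :
    mulT3 μ X (Y + Y') = mulT3 μ X Y + mulT3 μ X Y' := by
  simp [mulT3, tmul_add]

lemma comm_mulT2 (X Y : A ⊗[k] A) :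
    TensorProduct.comm k A A (mulT2 μ X Y)
      = mulT2 μ (TensorProduct.comm k A A X) (TensorProduct.comm k A A Y) := by
  induction X using TensorProduct.induction_on with
  | zero => simp
  | add x x' hx hx' => simp [hx, hx']
  | tmul a b =>
    induction Y using TensorProduct.induction_on with
    | zero => simp
    | add y y' hy hy' => simp [hy, hy']
    | tmul a' b' => simp

end Multiplication

noncomputable abbrev swap12 : (A ⊗[k] A) ⊗[k] A →ₗ[k] (A ⊗[k] A) ⊗[k] A :=
  (TensorProduct.comm k A A).toLinearMap.rTensor A

lemma swap12_mulT3 (μ : A →ₗ[k] A →ₗ[k] A) (X Y : (A ⊗[k] A) ⊗[k] A) :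
    swap12 (mulT3 μ X Y) = mulT3 μ (swap12 X) (swap12 Y) := by
  induction X using TensorProduct.induction_on with
  | zero => simp
  | add x x' hx hx' => simp [hx, hx']
  | tmul x z =>
    induction Y using TensorProduct.induction_on with
    | zero => simp
    | add y y' hy hy' => simp [hy, hy']
    | tmul y w => simp [comm_mulT2]

lemma swap12_swap12 (X : (A ⊗[k] A) ⊗[k] A) : swap12 (swap12 X) = X := by
  induction X using TensorProduct.induction_on with
  | zero => simp
  | add x x' hx hx' => simp [hx, hx']
  | tmul x z => simp

lemma swap12_R23e (c : A) (R : A ⊗[k] A) : swap12 (R23e c R) = R13e c R := rfl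

lemma swap12_R13e (c : A) (R : A ⊗[k] A) : swap12 (R13e c R) = R23e c R := by
  rw [← swap12_R23e, swap12_swap12]

lemma mulT3_R23e_R13e (μ : A →ₗ[k] A →ₗ[k] A) (c : A) (R : A ⊗[k] A) :
    mulT3 μ (R23e c R) (R13e c R) = swap12 (mulT3 μ (R13e c R) (R23e c R)) := by
  rw [swap12_mulT3, swap12_R13e, swap12_R23e]

lemma mulT3_R12e_map (μ : A →ₗ[k] A →ₗ[k] A) (Δ : A →ₗ[k] A ⊗[k] A) (α : A →ₗ[k] A)
    (c : A) (R : A ⊗[k] A) (hcl : ∀ x : A, μ c x = α x) (hcr : ∀ x : A, μ x c = α x)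
    (hR : ∀ x : A, mulT2 μ (TensorProduct.comm k A A (Δ x)) R = mulT2 μ R (Δ x))
    (S : A ⊗[k] A) :
    mulT3 μ (R12e c R) (map Δ α S)
      = mulT3 μ (map ((TensorProduct.comm k A A).toLinearMap ∘ₗ Δ) α S) (R12e c R) := by
  induction S using TensorProduct.induction_on with
  | zero => simp
  | add x y hx hy => simp only [map_add, mulT3_add_left, mulT3_add_right, hx, hy]
  | tmul s t => simp [R12e, hR, hcl, hcr]

theorem quantum_hom_yang_baxter_second_general
    (μ : A →ₗ[k] A →ₗ[k] A) (Δ : A →ₗ[k] A ⊗[k] A) (α : A →ₗ[k] A) (c : A) (R : A ⊗[k] A)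
    (hcl : ∀ x : A, μ c x = α x) (hcr : ∀ x : A, μ x c = α x)
    (hR1 : TensorProduct.map Δ α R = mulT3 μ (R13e c R) (R23e c R))
    (hR3 : ∀ x : A, mulT2 μ ((TensorProduct.comm k A A) (Δ x)) R = mulT2 μ R (Δ x)) :
    mulT3 μ (R12e c R) (mulT3 μ (R13e c R) (R23e c R))
      = mulT3 μ (mulT3 μ (R23e c R) (R13e c R)) (R12e c R) := by
  rw [mulT3_R23e_R13e, ← hR1, LinearMap.rTensor_map]
  exact mulT3_R12e_map μ Δ α c R hcl hcr hR3 R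

/-- In a quasi-triangular Hom-bialgebra `(A, μ, Δ, α, c, R)`, the element `R`
satisfies the second quantum Hom-Yang-Baxter equation `R₁₂ (R₁₃ R₂₃) = (R₂₃ R₁₃) R₁₂`. -/
theorem quantum_hom_yang_baxter_second
    (μ : A →ₗ[k] A →ₗ[k] A) (Δ : A →ₗ[k] A ⊗[k] A) (α : A →ₗ[k] A) (c : A) (R : A ⊗[k] A)
    (hαμ : ∀ x y : A, α (μ x y) = μ (α x) (α y))
    (hassoc : ∀ x y z : A, μ (μ x y) (α z) = μ (α x) (μ y z))
    (hαΔ : Δ ∘ₗ α = TensorProduct.map α α ∘ₗ Δ)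
    (hcoassoc : (TensorProduct.assoc k A A A).toLinearMap ∘ₗ TensorProduct.map Δ α ∘ₗ Δ
      = TensorProduct.map α Δ ∘ₗ Δ)
    (hcompat : ∀ x y : A, Δ (μ x y) = mulT2 μ (Δ x) (Δ y))
    (hcl : ∀ x : A, μ c x = α x) (hcr : ∀ x : A, μ x c = α x)
    (hR1 : TensorProduct.map Δ α R = mulT3 μ (R13e c R) (R23e c R))
    (hR2 : (TensorProduct.assoc k A A A).symm (TensorProduct.map α Δ R)
      = mulT3 μ (R13e c R) (R12e c R))
    (hR3 : ∀ x : A, mulT2 μ ((TensorProduct.comm k A A) (Δ x)) R = mulT2 μ R (Δ x)) :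
    mulT3 μ (R12e c R) (mulT3 μ (R13e c R) (R23e c R))
      = mulT3 μ (mulT3 μ (R23e c R) (R13e c R)) (R12e c R) :=
  quantum_hom_yang_baxter_second_general μ Δ α c R hcl hcr hR1 hR3
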